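/- arXiv:2006.12206 — 2 statements merged into one kernel-verified Lean document; each statement's English description precedes it below -/
import Mathlib

section
/- Let q ∈ L¹(ℝ) be real-valued, let λ be a nonzero real number, and let m : ℝ → ℂ be the (unique) bounded measurable solution of the Jost integral equation for q and λ. Define a(λ) := 1 − (2iλ)^{-1} ∫_ℝ q(t) m(t) dt and b(λ) := (2iλ)^{-1} ∫_ℝ e^{2iλt} q(t) m(t) dt. Then |a(λ)|² − |b(λ)|² = 1. -/
/-!
Write `g = q m` and `c = 2iλ`, so that `conj c = -c`. Then `|∫ g|² - |∫ e^{ct} g|²` is the double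
integral of `g(s) conj (g(t))` against the kernel `1 - e^{c(s-t)}`, and this kernel is
`-c D(s-t)` plus its adjoint `conj (-c D(t-s))`. Integrating the `D` part in `s` first, the Jost
equation turns it into `-c ∫ (m - 1) conj g = -c (∫ q |m|² - conj ∫ g)`. As `q` is real, `∫ q |m|²`
is real and cancels against the adjoint part, leaving `|∫ g|² - |∫ e^{ct} g|² = c (conj ∫ g - ∫ g)`,
and multiplying `|a|² - |b|² = 1` by `|c|² = -c²` gives exactly this.
-/

open MeasureTheory

/-- The kernel `D(y,λ) = (e^{2iλy} - 1)/(2iλ)` for `y > 0`, extended by `0`. -/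
noncomputable def D (lam : ℂ) (y : ℝ) : ℂ :=
  if 0 < y then (Complex.exp (2 * Complex.I * lam * y) - 1) / (2 * Complex.I * lam) else 0

open scoped ComplexConjugate

theorem MeasureTheory.Integrable.complex_conj {α : Type*} {_ : MeasurableSpace α} {μ : Measure α}
    {f : α → ℂ} (hf : Integrable f μ) : Integrable (fun a => conj (f a)) μ :=
  (Complex.conjLIE.integrable_comp_iff).2 hf

noncomputable def kernelIntegrand (k g : ℝ → ℂ) (p : ℝ × ℝ) : ℂ :=
  k (p.1 - p.2) * g p.1 * conj (g p.2)

noncomputable def kernelForm (k g : ℝ → ℂ) : ℂ :=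
  ∫ p, kernelIntegrand k g p ∂(volume.prod volume)

section KernelForm

variable {k k₁ k₂ g : ℝ → ℂ}

theorem integrable_kernelIntegrand {K : ℝ} (hk : Measurable k) (hK : ∀ y, ‖k y‖ ≤ K)
    (hg : Integrable g) : Integrable (kernelIntegrand k g) (volume.prod volume) := by
  have hprod : Integrable (fun p : ℝ × ℝ => g p.1 * conj (g p.2)) (volume.prod volume) :=
    hg.mul_prod hg.complex_conj
  have hk' : AEStronglyMeasurable (fun p : ℝ × ℝ => k (p.1 - p.2)) (volume.prod volume) :=
    (hk.comp (measurable_fst.sub measurable_snd)).aestronglyMeasurable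
  unfold kernelIntegrand
  simpa only [mul_assoc] using
    hprod.bdd_mul hk' (Filter.Eventually.of_forall fun p => hK (p.1 - p.2))

theorem kernelIntegrand_const_mul (a : ℂ) :
    kernelIntegrand (fun y => a * k y) g = fun p => a * kernelIntegrand k g p := by
  ext p
  simp only [kernelIntegrand, mul_assoc]

theorem kernelIntegrand_conj_neg :
    kernelIntegrand (fun y => conj (k (-y))) g = fun p => conj (kernelIntegrand k g p.swap) := by
  ext p
  simp only [kernelIntegrand, Prod.fst_swap, Prod.snd_swap, neg_sub, map_mul,
    Complex.conj_conj]
  ring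

theorem kernelForm_add (h₁ : Integrable (kernelIntegrand k₁ g) (volume.prod volume))
    (h₂ : Integrable (kernelIntegrand k₂ g) (volume.prod volume)) :
    kernelForm (fun y => k₁ y + k₂ y) g = kernelForm k₁ g + kernelForm k₂ g := by
  rw [kernelForm, kernelForm, kernelForm, ← integral_add h₁ h₂]
  congr 1
  ext p
  simp only [kernelIntegrand]
  ring

theorem kernelForm_sub (h₁ : Integrable (kernelIntegrand k₁ g) (volume.prod volume))
    (h₂ : Integrable (kernelIntegrand k₂ g) (volume.prod volume)) :
    kernelForm (fun y => k₁ y - k₂ y) g = kernelForm k₁ g - kernelForm k₂ g := by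
  rw [kernelForm, kernelForm, kernelForm, ← integral_sub h₁ h₂]
  congr 1
  ext p
  simp only [kernelIntegrand]
  ring

theorem kernelForm_const_mul (a : ℂ) :
    kernelForm (fun y => a * k y) g = a * kernelForm k g := by
  rw [kernelForm, kernelIntegrand_const_mul, integral_const_mul, kernelForm]

theorem kernelForm_conj_neg : kernelForm (fun y => conj (k (-y))) g = conj (kernelForm k g) := by
  rw [kernelForm, kernelIntegrand_conj_neg, integral_conj, integral_prod_swap, kernelForm]

/-- For purely imaginary `c` the kernel `e^{c(s-t)}` factors as `e^{cs} · conj (e^{ct})`. -/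
theorem kernelForm_exp {c : ℂ} (hc : conj c = -c) :
    kernelForm (fun y => Complex.exp (c * y)) g = ‖∫ t : ℝ, Complex.exp (c * t) * g t‖ ^ 2 := by
  have hfactor : ∀ p : ℝ × ℝ, kernelIntegrand (fun y => Complex.exp (c * y)) g p
      = Complex.exp (c * p.1) * g p.1 * conj (Complex.exp (c * p.2) * g p.2) := by
    intro p
    rw [kernelIntegrand, map_mul, ← Complex.exp_conj, map_mul, hc, Complex.conj_ofReal,
      Complex.ofReal_sub, mul_sub, sub_eq_add_neg, Complex.exp_add, ← neg_mul]
    ring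
  rw [kernelForm, funext hfactor, integral_prod_mul (fun s : ℝ => Complex.exp (c * s) * g s)
    (fun t : ℝ => conj (Complex.exp (c * t) * g t)), integral_conj, Complex.mul_conj,
    Complex.normSq_eq_norm_sq, Complex.ofReal_pow]

theorem kernelForm_eq_integral_integral
    (hint : Integrable (kernelIntegrand k g) (volume.prod volume)) :
    kernelForm k g = ∫ t, (∫ s, k (s - t) * g s) * conj (g t) := by
  rw [kernelForm, integral_prod_symm _ hint]
  simp only [kernelIntegrand, integral_mul_const]

end KernelForm

theorem measurable_D (lam : ℂ) : Measurable (D lam) :=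
  Measurable.ite (measurableSet_lt measurable_const measurable_id) (by fun_prop) measurable_const

theorem D_of_nonpos (lam : ℂ) {y : ℝ} (hy : y ≤ 0) : D lam y = 0 :=
  if_neg hy.not_gt

theorem norm_D_le (lam y : ℝ) : ‖D lam y‖ ≤ |lam|⁻¹ := by
  rcases le_or_gt y 0 with hy | hy
  · rw [D_of_nonpos _ hy, norm_zero]
    positivity
  rw [D, if_pos hy, norm_div]
  have hnum : ‖Complex.exp (2 * Complex.I * lam * y) - 1‖ ≤ 2 := by
    calc ‖Complex.exp (2 * Complex.I * lam * y) - 1‖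
        ≤ ‖Complex.exp (2 * Complex.I * lam * y)‖ + ‖(1 : ℂ)‖ := norm_sub_le _ _
      _ = 2 := by rw [Complex.norm_exp]; norm_num
  have hden : ‖2 * Complex.I * (lam : ℂ)‖ = 2 * |lam| := by simp
  rcases eq_or_ne lam 0 with rfl | hne
  · simp
  rw [hden, div_le_iff₀ (by positivity)]
  calc _ ≤ (2 : ℝ) := hnum
    _ = |lam|⁻¹ * (2 * |lam|) := by field_simp

theorem conj_two_mul_I_mul_ofReal (lam : ℝ) :
    conj (2 * Complex.I * (lam : ℂ)) = -(2 * Complex.I * lam) := by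
  simp [map_ofNat]

theorem one_sub_exp_eq_D_add_conj_D {lam : ℝ} (hne : lam ≠ 0) (y : ℝ) :
    1 - Complex.exp (2 * Complex.I * lam * y)
      = -(2 * Complex.I * lam) * D lam y + conj (-(2 * Complex.I * lam) * D lam (-y)) := by
  have hc : 2 * Complex.I * (lam : ℂ) ≠ 0 := by simp [hne]
  rcases lt_trichotomy y 0 with hy | rfl | hy
  · rw [D_of_nonpos _ hy.le, mul_zero, zero_add, D, if_pos (neg_pos.2 hy), neg_mul,
      mul_div_cancel₀ _ hc, map_neg, map_sub, map_one, ← Complex.exp_conj, map_mul,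
      conj_two_mul_I_mul_ofReal, Complex.conj_ofReal]
    push_cast
    ring_nf
  · simp [D]
  · rw [D_of_nonpos _ (neg_nonpos.2 hy.le), D, if_pos hy, neg_mul, mul_div_cancel₀ _ hc]
    simp

theorem sq_norm_integral_sub_sq_norm_integral_exp {lam : ℝ} (hne : lam ≠ 0) {g : ℝ → ℂ}
    (hg : Integrable g) :
    ((‖∫ t, g t‖ ^ 2 - ‖∫ t : ℝ, Complex.exp (2 * Complex.I * lam * t) * g t‖ ^ 2 : ℝ) : ℂ)
      = -(2 * Complex.I * lam) * kernelForm (D lam) g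
        + conj (-(2 * Complex.I * lam) * kernelForm (D lam) g) := by
  set c : ℂ := 2 * Complex.I * lam
  have hc : conj c = -c := conj_two_mul_I_mul_ofReal lam
  have h_one : Integrable (kernelIntegrand (fun _ => 1) g) (volume.prod volume) :=
    integrable_kernelIntegrand measurable_const (fun _ => norm_one.le) hg
  have h_exp : Integrable (kernelIntegrand (fun y => Complex.exp (c * y)) g)
      (volume.prod volume) :=
    integrable_kernelIntegrand (K := 1) (by fun_prop) (fun y => by simp [c, Complex.norm_exp]) hg
  have h_D : Integrable (kernelIntegrand (fun y => -c * D lam y) g) (volume.prod volume) := by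
    rw [kernelIntegrand_const_mul]
    exact (integrable_kernelIntegrand (measurable_D lam) (norm_D_le lam) hg).const_mul _
  have h_D_adj : Integrable (kernelIntegrand (fun y => conj (-c * D lam (-y))) g)
      (volume.prod volume) := by
    rw [kernelIntegrand_conj_neg (k := fun y => -c * D lam y)]
    exact h_D.swap.complex_conj
  calc _ = kernelForm (fun _ => 1) g - kernelForm (fun y => Complex.exp (c * y)) g := by
        have h_const : kernelForm (fun _ => 1) g = ‖∫ t, g t‖ ^ 2 := by
          simpa using kernelForm_exp (g := g) (c := 0) (by simp)
        rw [h_const, kernelForm_exp hc]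
        push_cast
        rfl
    _ = kernelForm (fun y => -c * D lam y + conj (-c * D lam (-y))) g := by
        rw [← kernelForm_sub h_one h_exp]
        simp only [c, one_sub_exp_eq_D_add_conj_D hne]
    _ = -c * kernelForm (D lam) g + conj (-c * kernelForm (D lam) g) := by
        rw [kernelForm_add h_D h_D_adj, kernelForm_conj_neg (k := fun y => -c * D lam y),
          kernelForm_const_mul]

theorem kernelForm_D_eq_of_jost {lam : ℝ} {q : ℝ → ℝ} {m : ℝ → ℂ}
    (hg : Integrable (fun t => (q t : ℂ) * m t))
    (heq : ∀ x, m x = 1 + ∫ t in Set.Ioi x, D (lam : ℂ) (t - x) * (q t : ℂ) * m t) :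
    kernelForm (D lam) (fun t => (q t : ℂ) * m t)
      = ∫ t, (m t - 1) * conj ((q t : ℂ) * m t) := by
  rw [kernelForm_eq_integral_integral
    (integrable_kernelIntegrand (measurable_D lam) (norm_D_le lam) hg)]
  congr 1
  ext t
  congr 1
  rw [heq t, add_sub_cancel_left,
    ← setIntegral_eq_integral_of_forall_compl_eq_zero (s := Set.Ioi t)]
  · simp only [mul_assoc]
  · intro s hs
    rw [D_of_nonpos _ (sub_nonpos.2 (not_lt.1 hs)), zero_mul]

theorem norm_one_sub_inv_mul_sq_sub_norm_inv_mul_sq {c z₁ z₂ : ℂ} (hc₀ : c ≠ 0)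
    (hc : conj c = -c) (h : ((‖z₁‖ ^ 2 - ‖z₂‖ ^ 2 : ℝ) : ℂ) = c * (conj z₁ - z₁)) :
    ‖1 - c⁻¹ * z₁‖ ^ 2 - ‖c⁻¹ * z₂‖ ^ 2 = 1 := by
  apply Complex.ofReal_injective
  push_cast at h ⊢
  simp only [← Complex.mul_conj', map_sub, map_mul, map_one, map_inv₀, hc, inv_neg] at h ⊢
  linear_combination (-(c⁻¹ * c⁻¹)) * h + (-(c⁻¹) * (conj z₁ - z₁)) * mul_inv_cancel₀ hc₀

theorem scattering_coefficients_identity (q : ℝ → ℝ) (hq : Integrable q)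
    (lam : ℝ) (hne : lam ≠ 0)
    (m : ℝ → ℂ) (hmeas : Measurable m) (hbd : ∃ C, ∀ x, ‖m x‖ ≤ C)
    (heq : ∀ x, m x = 1 + ∫ t in Set.Ioi x, D (lam : ℂ) (t - x) * (q t : ℂ) * m t) :
    ‖1 - (2 * Complex.I * lam)⁻¹ * ∫ t : ℝ, (q t : ℂ) * m t‖ ^ 2
      - ‖(2 * Complex.I * lam)⁻¹ *
          ∫ t : ℝ, Complex.exp (2 * Complex.I * lam * t) * (q t : ℂ) * m t‖ ^ 2 = 1 := by
  obtain ⟨C, hC⟩ := hbd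
  have hg : Integrable (fun t => (q t : ℂ) * m t) :=
    (hq.ofReal.bdd_mul hmeas.aestronglyMeasurable (.of_forall hC)).congr
      (.of_forall fun t => mul_comm _ _)
  have h_mg : Integrable (fun t => m t * conj ((q t : ℂ) * m t)) :=
    hg.complex_conj.bdd_mul hmeas.aestronglyMeasurable (.of_forall hC)
  have h_real :
      conj (∫ t, m t * conj ((q t : ℂ) * m t)) = ∫ t, m t * conj ((q t : ℂ) * m t) := by
    rw [← integral_conj]
    congr 1
    ext t
    simp only [map_mul, Complex.conj_conj, Complex.conj_ofReal]
    ring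
  have h_form : kernelForm (D lam) (fun t => (q t : ℂ) * m t)
      = (∫ t, m t * conj ((q t : ℂ) * m t)) - conj (∫ t, (q t : ℂ) * m t) := by
    rw [kernelForm_D_eq_of_jost hg heq, ← integral_conj, ← integral_sub h_mg hg.complex_conj]
    simp only [sub_mul, one_mul]
  have h_key := sq_norm_integral_sub_sq_norm_integral_exp hne hg
  rw [h_form, map_mul, map_sub, h_real, Complex.conj_conj, map_neg,
    conj_two_mul_I_mul_ofReal] at h_key
  simp only [mul_assoc (Complex.exp _)]
  exact norm_one_sub_inv_mul_sq_sub_norm_inv_mul_sq (by simp [hne])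
    (conj_two_mul_I_mul_ofReal lam) (by rw [h_key]; ring)
end

section
/- Let q ∈ L¹(ℝ) be complex-valued. For each λ in the open upper half-plane ℂ₊ let m_λ : ℝ → ℂ be the unique bounded solution of the Jost integral equation for q and λ, and set a(λ) := 1 − (2iλ)^{-1} ∫_ℝ q(t) m_λ(t) dt. Then the function λ ↦ a(λ) is holomorphic (complex differentiable) on ℂ₊. -/
/-!
For `Im λ ≥ δ > 0` the kernel satisfies `|D(y,λ)| ≤ 1/δ`. With `Q(x) = ∫_x^∞ |q|` (`tailNorm q x`)
one has `∫_x^∞ Q^n |q| ≤ Q(x)^{n+1}/(n+1)`, so the Volterra operator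
`T_λ f (x) = ∫_x^∞ D(t-x,λ) q(t) f(t) dt` obeys `|T_λ^n f (x)| ≤ sup|f| · (Q(x)/δ)^n / n!`.
Hence every bounded solution of `m = 1 + T_λ m` is the Neumann series `∑ T_λ^n 1`, whose terms
are holomorphic in `λ` (holomorphy passes through dominated integrals by Cauchy's estimate) and
which converges uniformly on `{Im λ > δ}`. So `λ ↦ m_λ(x)` is holomorphic and bounded by
`exp(‖q‖₁/δ)` there, and a last dominated integral gives `a`.
-/

open MeasureTheory

open Set Filter Topology Metric

lemma D_eq_max (lam : ℂ) (y : ℝ) :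
    D lam y = (Complex.exp (2 * Complex.I * lam * (max y 0 : ℝ)) - 1) / (2 * Complex.I * lam) := by
  unfold D
  split_ifs with hy
  · rw [max_eq_left hy.le]
  · simp [max_eq_right (not_lt.1 hy)]

lemma continuous_D (lam : ℂ) : Continuous (D lam) := by
  simp_rw [funext (D_eq_max lam)]
  fun_prop

lemma norm_D_le_s8 {lam : ℂ} (hlam : 0 < lam.im) (y : ℝ) : ‖D lam y‖ ≤ 1 / lam.im := by
  have hexp : ‖Complex.exp (2 * Complex.I * lam * (max y 0 : ℝ))‖ ≤ 1 := by
    rw [Complex.norm_exp, Real.exp_le_one_iff]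
    simp only [Complex.mul_re, Complex.mul_im, Complex.ofReal_re, Complex.ofReal_im,
      Complex.I_re, Complex.I_im, Complex.re_ofNat, Complex.im_ofNat]
    nlinarith [le_max_right y 0]
  have hnum : ‖Complex.exp (2 * Complex.I * lam * (max y 0 : ℝ)) - 1‖ ≤ 2 :=
    (norm_sub_le _ _).trans (by rw [norm_one]; linarith)
  have hden : 2 * lam.im ≤ ‖2 * Complex.I * lam‖ := by
    rw [norm_mul, norm_mul, Complex.norm_I, Complex.norm_two, mul_one]
    linarith [Complex.im_le_norm lam]
  rw [D_eq_max, norm_div]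
  calc _ ≤ 2 / (2 * lam.im) := div_le_div₀ zero_le_two hnum (by positivity) hden
    _ = 1 / lam.im := by field_simp

lemma differentiableAt_D {lam : ℂ} (hlam : lam ≠ 0) (y : ℝ) :
    DifferentiableAt ℂ (fun l => D l y) lam := by
  unfold D
  split_ifs
  · exact .div (by fun_prop) (by fun_prop) (by simp [hlam])
  · exact differentiableAt_const _

noncomputable def tailNorm (q : ℝ → ℂ) (x : ℝ) : ℝ := ∫ t in Ioi x, ‖q t‖

section tailNorm

variable {q : ℝ → ℂ}

lemma tailNorm_nonneg (q : ℝ → ℂ) (x : ℝ) : 0 ≤ tailNorm q x :=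
  setIntegral_nonneg measurableSet_Ioi fun _ _ => norm_nonneg _

lemma tailNorm_le (hq : Integrable q) (x : ℝ) : tailNorm q x ≤ ∫ t, ‖q t‖ :=
  setIntegral_le_integral hq.norm (.of_forall fun _ => norm_nonneg _)

lemma tailNorm_antitone (hq : Integrable q) : Antitone (tailNorm q) := fun _ _ hxy =>
  setIntegral_mono_set hq.norm.integrableOn (.of_forall fun _ => norm_nonneg _)
    (Ioi_subset_Ioi hxy).eventuallyLE

lemma tailNorm_sub_tailNorm (hq : Integrable q) (a b : ℝ) :
    tailNorm q a - tailNorm q b = ∫ t in a..b, ‖q t‖ :=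
  intervalIntegral.integral_Ioi_sub_Ioi' hq.norm.integrableOn hq.norm.integrableOn

lemma ae_hasDerivAt_tailNorm (hq : Integrable q) :
    ∀ᵐ x, HasDerivAt (tailNorm q) (-‖q x‖) x := by
  filter_upwards [LocallyIntegrable.ae_hasDerivAt_integral hq.norm.locallyIntegrable] with x hx
  have hQ : tailNorm q = fun y => tailNorm q 0 - ∫ t in (0 : ℝ)..y, ‖q t‖ := by
    ext y
    rw [← tailNorm_sub_tailNorm hq, sub_sub_cancel]
  rw [hQ]
  exact (hx 0).const_sub _

lemma integrable_tailNorm_pow_mul (hq : Integrable q) (k : ℕ) :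
    Integrable fun t => tailNorm q t ^ k * ‖q t‖ := by
  refine hq.norm.bdd_mul (c := (∫ t, ‖q t‖) ^ k)
    ((tailNorm_antitone hq).measurable.pow_const k).aestronglyMeasurable (.of_forall fun t => ?_)
  rw [Real.norm_of_nonneg (pow_nonneg (tailNorm_nonneg q t) k)]
  exact pow_le_pow_left₀ (tailNorm_nonneg q t) (tailNorm_le hq t) k

lemma integral_tailNorm_pow_mul_le (hq : Integrable q) (k : ℕ) (x : ℝ) :
    ∫ t in Ioi x, tailNorm q t ^ k * ‖q t‖ ≤ tailNorm q x ^ (k + 1) / (k + 1) := by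
  have hderiv : ∀ᵐ t, deriv (fun s => -tailNorm q s ^ (k + 1)) t
      = (k + 1) * (tailNorm q t ^ k * ‖q t‖) := by
    filter_upwards [ae_hasDerivAt_tailNorm hq] with t ht
    rw [((ht.fun_pow (k + 1)).fun_neg).deriv]
    push_cast
    ring
  -- `-Q^{k+1}` is monotone with a.e. derivative `(k+1) Q^k ‖q‖`, so the integral of that
  -- derivative over `[x, b]` is at most its increment
  have hmono : Monotone fun s => -tailNorm q s ^ (k + 1) := fun a b hab =>
    neg_le_neg (pow_le_pow_left₀ (tailNorm_nonneg q b) (tailNorm_antitone hq hab) _)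
  have hbound : ∀ b, x ≤ b → (k + 1) * ∫ t in x..b, tailNorm q t ^ k * ‖q t‖
      ≤ tailNorm q x ^ (k + 1) := by
    intro b hxb
    have := (hmono.monotoneOn (uIcc x b)).intervalIntegral_deriv_mem_uIcc
    rw [intervalIntegral.integral_congr_ae (hderiv.mono fun t ht _ => ht),
      intervalIntegral.integral_const_mul, uIcc_of_le] at this
    · linarith [this.2, pow_nonneg (tailNorm_nonneg q b) (k + 1)]
    · exact sub_nonneg.2 (hmono hxb)
  rw [le_div_iff₀ (by positivity), mul_comm]
  exact le_of_tendsto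
    ((intervalIntegral_tendsto_integral_Ioi x
      (integrable_tailNorm_pow_mul hq k).integrableOn tendsto_id).const_mul _)
    (eventually_ge_atTop x |>.mono hbound)

end tailNorm

section ParametricIntegral

variable {α : Type*} [MeasurableSpace α] {μ : Measure α}

lemma aestronglyMeasurable_deriv_of_eventually {𝕜 E : Type*} [NontriviallyNormedField 𝕜]
    [NormedAddCommGroup E] [NormedSpace 𝕜 E] {F : 𝕜 → α → E} {z₀ : 𝕜}
    (hF_meas : ∀ᶠ z in 𝓝 z₀, AEStronglyMeasurable (F z) μ)
    (hF_diff : ∀ᵐ t ∂μ, DifferentiableAt 𝕜 (F · t) z₀) :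
    AEStronglyMeasurable (fun t => deriv (F · t) z₀) μ := by
  classical
  -- difference quotients, replaced by `0` where they might fail to be measurable
  let G : 𝕜 → α → E := fun z t =>
    if AEStronglyMeasurable (F z) μ then slope (F · t) z₀ z else 0
  refine aestronglyMeasurable_of_tendsto_ae (𝓝[≠] z₀) (f := G) (fun z => ?_) ?_
  · by_cases hz : AEStronglyMeasurable (F z) μ
    · simp only [G, hz, if_true, slope_def_module]
      exact (hz.sub hF_meas.self_of_nhds).const_smul _
    · simp only [G, hz, if_false]
      exact aestronglyMeasurable_const
  · filter_upwards [hF_diff] with t ht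
    refine (hasDerivAt_iff_tendsto_slope.1 ht.hasDerivAt).congr' ?_
    filter_upwards [nhdsWithin_le_nhds hF_meas] with z hz
    simp only [G, hz, if_true]

theorem differentiableOn_integral_of_dominated {E : Type*} [NormedAddCommGroup E]
    [NormedSpace ℂ E] [CompleteSpace E] {F : ℂ → α → E} {U : Set ℂ} {bound : α → ℝ}
    (hU : IsOpen U) (hF_meas : ∀ z ∈ U, AEStronglyMeasurable (F z) μ)
    (hF_diff : ∀ᵐ t ∂μ, DifferentiableOn ℂ (F · t) U)
    (h_bound : ∀ᵐ t ∂μ, ∀ z ∈ U, ‖F z t‖ ≤ bound t) (bound_integrable : Integrable bound μ) :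
    DifferentiableOn ℂ (fun z => ∫ t, F z t ∂μ) U := by
  intro z₀ hz₀
  obtain ⟨ε, hε, hεU⟩ := Metric.isOpen_iff.1 hU z₀ hz₀
  obtain ⟨r, hr, hrε⟩ : ∃ r, 0 < r ∧ 2 * r < ε := ⟨ε / 4, by positivity, by linarith⟩
  have hclosed : closedBall z₀ (2 * r) ⊆ U := (closedBall_subset_ball hrε).trans hεU
  have hball : ∀ z ∈ ball z₀ r, closedBall z r ⊆ closedBall z₀ (2 * r) := fun z hz =>
    closedBall_subset_closedBall' (by linarith [mem_ball.1 hz])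
  have hU_nhds : U ∈ 𝓝 z₀ := hU.mem_nhds hz₀
  -- Cauchy's estimate bounds the derivative by the function itself
  have hderiv_le : ∀ᵐ t ∂μ, ∀ z ∈ ball z₀ r, ‖deriv (F · t) z‖ ≤ bound t / r := by
    filter_upwards [hF_diff, h_bound] with t hd hb z hz
    refine Complex.norm_deriv_le_of_forall_mem_sphere_norm_le hr
      (hd.diffContOnCl_ball ((hball z hz).trans hclosed)) fun w hw => hb w ?_
    exact hclosed (hball z hz (sphere_subset_closedBall hw))
  have hF_int : Integrable (F z₀) μ := bound_integrable.mono' (hF_meas z₀ hz₀)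
    (h_bound.mono fun t ht => ht z₀ hz₀)
  have hF'_meas := aestronglyMeasurable_deriv_of_eventually
    (eventually_of_mem hU_nhds hF_meas) (hF_diff.mono fun t ht => ht.differentiableAt hU_nhds)
  have h_diff : ∀ᵐ t ∂μ, ∀ z ∈ ball z₀ r, HasDerivAt (F · t) (deriv (F · t) z) z := by
    filter_upwards [hF_diff] with t hd z hz
    exact (hd.differentiableAt (hU.mem_nhds
      (hclosed (ball_subset_closedBall (ball_subset_ball (by linarith) hz))))).hasDerivAt
  exact (hasDerivAt_integral_of_dominated_loc_of_deriv_le (ball_mem_nhds z₀ hr)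
    (eventually_of_mem hU_nhds hF_meas) hF_int hF'_meas hderiv_le
    (bound_integrable.div_const r) h_diff).2.differentiableAt.differentiableWithinAt

end ParametricIntegral

noncomputable def jostOp (q : ℝ → ℂ) (lam : ℂ) (f : ℝ → ℂ) (x : ℝ) : ℂ :=
  ∫ t in Ioi x, D lam (t - x) * q t * f t

structure IsJostSolution (q : ℝ → ℂ) (lam : ℂ) (f : ℝ → ℂ) : Prop where
  aestronglyMeasurable : AEStronglyMeasurable f
  bounded : ∃ C, ∀ x, ‖f x‖ ≤ C
  eq_one_add : ∀ x, f x = 1 + jostOp q lam f x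

section jostOp

variable {q f : ℝ → ℂ} {lam : ℂ} {C : ℝ}

lemma jostOp_eq_integral (q : ℝ → ℂ) (lam : ℂ) (f : ℝ → ℂ) (x : ℝ) :
    jostOp q lam f x = ∫ t, D lam (t - x) * q t * f t := by
  refine setIntegral_eq_integral_of_forall_compl_eq_zero fun t ht => ?_
  rw [D, if_neg (by simpa using ht), zero_mul, zero_mul]

lemma norm_D_mul_le (hlam : 0 < lam.im) (x t : ℝ) :
    ‖D lam (t - x) * q t * f t‖ ≤ ‖q t‖ * ‖f t‖ / lam.im := by
  rw [norm_mul, norm_mul, mul_assoc, div_eq_mul_one_div, mul_comm]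
  gcongr
  exact norm_D_le_s8 hlam _

lemma norm_D_mul_le_of_le (hlam : 0 < lam.im) (hfC : ∀ t, ‖f t‖ ≤ C) (x t : ℝ) :
    ‖D lam (t - x) * q t * f t‖ ≤ ‖q t‖ * (C / lam.im) :=
  calc _ ≤ ‖q t‖ * ‖f t‖ / lam.im := norm_D_mul_le hlam x t
    _ ≤ ‖q t‖ * (C / lam.im) := by rw [mul_div_assoc]; gcongr; exact hfC t

lemma integrable_D_mul (hq : Integrable q) (hlam : 0 < lam.im) (hf : AEStronglyMeasurable f)
    (hfC : ∀ t, ‖f t‖ ≤ C) (x : ℝ) : Integrable fun t => D lam (t - x) * q t * f t :=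
  (hq.norm.mul_const (C / lam.im)).mono'
    (((continuous_D lam).comp (continuous_sub_right x)).aestronglyMeasurable.mul
      hq.aestronglyMeasurable |>.mul hf) (.of_forall (norm_D_mul_le_of_le hlam hfC x))

lemma continuous_jostOp (hq : Integrable q) (hlam : 0 < lam.im) (hf : AEStronglyMeasurable f)
    (hfC : ∀ t, ‖f t‖ ≤ C) : Continuous (jostOp q lam f) := by
  simp_rw [funext (jostOp_eq_integral q lam f)]
  exact continuous_of_dominated (bound := fun t => ‖q t‖ * (C / lam.im))
    (fun x => (integrable_D_mul hq hlam hf hfC x).aestronglyMeasurable)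
    (fun x => .of_forall (norm_D_mul_le_of_le hlam hfC x)) (hq.norm.mul_const _)
    (.of_forall fun t => ((continuous_D lam).comp (continuous_sub_left t)).mul continuous_const
      |>.mul continuous_const)

lemma norm_jostOp_le (hq : Integrable q) (hlam : 0 < lam.im) (hC : 0 ≤ C) {n : ℕ}
    (hf : ∀ t, ‖f t‖ ≤ C * ((tailNorm q t / lam.im) ^ n / n.factorial)) (x : ℝ) :
    ‖jostOp q lam f x‖ ≤ C * ((tailNorm q x / lam.im) ^ (n + 1) / (n + 1).factorial) := by
  set c := C / (lam.im ^ (n + 1) * n.factorial)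
  have hpt : ∀ t, ‖D lam (t - x) * q t * f t‖ ≤ c * (tailNorm q t ^ n * ‖q t‖) := fun t =>
    calc _ ≤ ‖q t‖ * ‖f t‖ / lam.im := norm_D_mul_le hlam x t
      _ ≤ ‖q t‖ * (C * ((tailNorm q t / lam.im) ^ n / n.factorial)) / lam.im := by
        gcongr; exact hf t
      _ = c * (tailNorm q t ^ n * ‖q t‖) := by simp only [c, div_pow]; field_simp; ring
  calc ‖jostOp q lam f x‖ ≤ ∫ t in Ioi x, c * (tailNorm q t ^ n * ‖q t‖) :=
        norm_integral_le_of_norm_le ((integrable_tailNorm_pow_mul hq n).const_mul c).integrableOn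
          (.of_forall hpt)
    _ ≤ c * (tailNorm q x ^ (n + 1) / (n + 1)) := by
        rw [integral_const_mul]
        gcongr
        exact integral_tailNorm_pow_mul_le hq n x
    _ = _ := by simp only [c, div_pow, Nat.factorial_succ]; push_cast; field_simp

lemma norm_jostOp_iterate_le (hq : Integrable q) (hlam : 0 < lam.im) (hfC : ∀ t, ‖f t‖ ≤ C)
    (n : ℕ) (x : ℝ) :
    ‖(jostOp q lam)^[n] f x‖ ≤ C * ((tailNorm q x / lam.im) ^ n / n.factorial) := by
  have hC : 0 ≤ C := (norm_nonneg _).trans (hfC 0)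
  induction n generalizing x with
  | zero => simpa using hfC x
  | succ n ih =>
    rw [Function.iterate_succ_apply']
    exact norm_jostOp_le hq hlam hC ih x

lemma norm_jostOp_iterate_le_of_le (hq : Integrable q) {δ : ℝ} (hδ : 0 < δ)
    (hlam : δ ≤ lam.im) (hfC : ∀ t, ‖f t‖ ≤ C) (n : ℕ) (x : ℝ) :
    ‖(jostOp q lam)^[n] f x‖ ≤ C * (((∫ t, ‖q t‖) / δ) ^ n / n.factorial) := by
  have hC : 0 ≤ C := (norm_nonneg _).trans (hfC 0)
  have hQ := tailNorm_nonneg q x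
  have hQle := tailNorm_le hq x
  refine (norm_jostOp_iterate_le hq (hδ.trans_le hlam) hfC n x).trans ?_
  gcongr
  exact div_nonneg hQ (hδ.le.trans hlam)

lemma aestronglyMeasurable_jostOp_iterate (hq : Integrable q) (hlam : 0 < lam.im)
    (hf : AEStronglyMeasurable f) (hfC : ∀ t, ‖f t‖ ≤ C) (n : ℕ) :
    AEStronglyMeasurable ((jostOp q lam)^[n] f) := by
  induction n with
  | zero => exact hf
  | succ n ih =>
    rw [Function.iterate_succ']
    exact (continuous_jostOp hq hlam ih
      (norm_jostOp_iterate_le_of_le hq hlam le_rfl hfC n)).aestronglyMeasurable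

end jostOp

namespace IsJostSolution

variable {q m : ℝ → ℂ} {lam : ℂ}

lemma eq_sum_jostOp_iterate_add (hq : Integrable q) (hlam : 0 < lam.im)
    (hm : IsJostSolution q lam m) (n : ℕ) (x : ℝ) :
    m x = ∑ i ∈ Finset.range n, (jostOp q lam)^[i] 1 x + (jostOp q lam)^[n] m x := by
  obtain ⟨C, hC⟩ := hm.bounded
  induction n generalizing x with
  | zero => simp
  | succ n ih =>
    have hu : ∀ i, IntegrableOn (fun t => D lam (t - x) * q t * (jostOp q lam)^[i] 1 t) (Ioi x) :=
      fun i => (integrable_D_mul hq hlam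
        (aestronglyMeasurable_jostOp_iterate hq hlam aestronglyMeasurable_const
          (fun _ => norm_one.le) i)
        (norm_jostOp_iterate_le_of_le hq hlam le_rfl (fun _ => norm_one.le) i) x).integrableOn
    have hw : IntegrableOn (fun t => D lam (t - x) * q t * (jostOp q lam)^[n] m t) (Ioi x) :=
      (integrable_D_mul hq hlam
        (aestronglyMeasurable_jostOp_iterate hq hlam hm.aestronglyMeasurable hC n)
        (norm_jostOp_iterate_le_of_le hq hlam le_rfl hC n) x).integrableOn
    have hsplit : jostOp q lam m x = ∑ i ∈ Finset.range n, jostOp q lam ((jostOp q lam)^[i] 1) x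
        + jostOp q lam ((jostOp q lam)^[n] m) x := by
      simp only [jostOp]
      rw [← integral_finsetSum _ fun i _ => hu i,
        ← integral_add (integrable_finsetSum _ fun i _ => hu i) hw]
      refine setIntegral_congr_fun measurableSet_Ioi fun t _ => ?_
      simp only [ih t, mul_add, Finset.mul_sum]
    rw [hm.eq_one_add x, hsplit, Finset.sum_range_succ', Function.iterate_succ_apply']
    simp only [Function.iterate_succ_apply', Function.iterate_zero_apply, Pi.one_apply]
    ring

lemma hasSum_jostOp_iterate (hq : Integrable q) (hlam : 0 < lam.im)
    (hm : IsJostSolution q lam m) (x : ℝ) :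
    HasSum (fun n => (jostOp q lam)^[n] 1 x) (m x) := by
  obtain ⟨C, hC⟩ := hm.bounded
  set s := tailNorm q x / lam.im
  have hsum : Summable fun n => ‖(jostOp q lam)^[n] 1 x‖ :=
    .of_nonneg_of_le (fun _ => norm_nonneg _)
      (fun n => (norm_jostOp_iterate_le hq hlam (fun _ => norm_one.le) n x).trans_eq (one_mul _))
      (Real.summable_pow_div_factorial s)
  have hrem : Tendsto (fun n => (jostOp q lam)^[n] m x) atTop (𝓝 0) := by
    refine squeeze_zero_norm (fun n => norm_jostOp_iterate_le hq hlam hC n x) ?_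
    simpa using (FloorSemiring.tendsto_pow_div_factorial_atTop s).const_mul C
  rw [hasSum_iff_tendsto_nat_of_summable_norm hsum]
  refine (by simpa using tendsto_const_nhds.sub hrem : Tendsto _ _ (𝓝 (m x))).congr fun n => ?_
  rw [hm.eq_sum_jostOp_iterate_add hq hlam n x, add_sub_cancel_right]

lemma norm_le_exp (hq : Integrable q) {δ : ℝ} (hδ : 0 < δ) (hlam : δ ≤ lam.im)
    (hm : IsJostSolution q lam m) (x : ℝ) : ‖m x‖ ≤ Real.exp ((∫ t, ‖q t‖) / δ) :=
  (hm.hasSum_jostOp_iterate hq (hδ.trans_le hlam) x).norm_le_of_bounded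
    (Real.exp_eq_exp_ℝ ▸ NormedSpace.expSeries_div_hasSum_exp _)
    fun n => (norm_jostOp_iterate_le_of_le hq hδ hlam (fun _ => norm_one.le) n x).trans_eq
      (one_mul _)

end IsJostSolution

section holomorphy

variable {q : ℝ → ℂ} {δ : ℝ}

lemma differentiableOn_jostOp_iterate (hq : Integrable q) (hδ : 0 < δ) (n : ℕ) (x : ℝ) :
    DifferentiableOn ℂ (fun lam => (jostOp q lam)^[n] 1 x) {lam | δ < lam.im} := by
  induction n generalizing x with
  | zero => exact differentiableOn_const 1
  | succ n ih =>
    set B := ((∫ t, ‖q t‖) / δ) ^ n / n.factorial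
    have hu : ∀ lam : ℂ, δ < lam.im → ∀ t, ‖(jostOp q lam)^[n] 1 t‖ ≤ B := fun lam hlam t =>
      (norm_jostOp_iterate_le_of_le hq hδ hlam.le (fun _ => norm_one.le) n t).trans_eq (one_mul _)
    simp only [Function.iterate_succ_apply', jostOp]
    refine differentiableOn_integral_of_dominated (isOpen_lt continuous_const Complex.continuous_im)
      (bound := fun t => ‖q t‖ * B / δ) (fun lam hlam => ?_) (.of_forall fun t lam hlam => ?_)
      (.of_forall fun t lam hlam => ?_) ((hq.norm.mul_const B).div_const δ).integrableOn
    · exact (integrable_D_mul hq (hδ.trans hlam) (aestronglyMeasurable_jostOp_iterate hq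
        (hδ.trans hlam) aestronglyMeasurable_const (fun _ => norm_one.le) n) (hu lam hlam)
        x).aestronglyMeasurable.restrict
    · have hlam0 : lam ≠ 0 := fun h => by simp [h] at hlam; linarith
      exact ((differentiableAt_D hlam0 (t - x)).differentiableWithinAt.mul_const (q t)).mul
        (ih t lam hlam)
    · have hlam' : δ ≤ lam.im := le_of_lt hlam
      have hut := hu lam hlam t
      refine (norm_D_mul_le (hδ.trans hlam) x t).trans ?_
      gcongr

lemma differentiableOn_jostSolution (hq : Integrable q) (hδ : 0 < δ) {m : ℂ → ℝ → ℂ}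
    (hm : ∀ lam : ℂ, δ < lam.im → IsJostSolution q lam (m lam)) (x : ℝ) :
    DifferentiableOn ℂ (fun lam => m lam x) {lam | δ < lam.im} :=
  (Complex.differentiableOn_tsum_of_summable_norm
    (Real.summable_pow_div_factorial ((∫ t, ‖q t‖) / δ))
    (fun n => differentiableOn_jostOp_iterate hq hδ n x)
    (isOpen_lt continuous_const Complex.continuous_im) fun n _ hlam =>
      (norm_jostOp_iterate_le_of_le hq hδ (le_of_lt hlam) (fun _ => norm_one.le) n x).trans_eq
        (one_mul _)).congr
    fun lam hlam => ((hm lam hlam).hasSum_jostOp_iterate hq (hδ.trans hlam) x).tsum_eq.symm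

lemma differentiableOn_integral_mul_jostSolution (hq : Integrable q) (hδ : 0 < δ)
    {m : ℂ → ℝ → ℂ} (hm : ∀ lam : ℂ, δ < lam.im → IsJostSolution q lam (m lam)) :
    DifferentiableOn ℂ (fun lam => ∫ t, q t * m lam t) {lam | δ < lam.im} :=
  differentiableOn_integral_of_dominated (isOpen_lt continuous_const Complex.continuous_im)
    (fun lam hlam => hq.aestronglyMeasurable.mul (hm lam hlam).aestronglyMeasurable)
    (.of_forall fun t => (differentiableOn_jostSolution hq hδ hm t).const_mul (q t))
    (.of_forall fun t lam hlam => by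
      rw [norm_mul]
      gcongr
      exact (hm lam hlam).norm_le_exp hq hδ (le_of_lt hlam) t)
    (hq.norm.mul_const _)

end holomorphy

theorem coefficient_a_holomorphic (q : ℝ → ℂ) (hq : Integrable q)
    (m : ℂ → ℝ → ℂ)
    (hm : ∀ lam : ℂ, 0 < lam.im →
      Measurable (m lam) ∧ (∃ C, ∀ x, ‖m lam x‖ ≤ C) ∧
      (∀ x, m lam x = 1 + ∫ t in Set.Ioi x, D lam (t - x) * q t * m lam t)) :
    DifferentiableOn ℂ
      (fun lam : ℂ => 1 - (2 * Complex.I * lam)⁻¹ * ∫ t : ℝ, q t * m lam t)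
      {z : ℂ | 0 < z.im} := by
  intro lam₀ hlam₀
  have him : 0 < lam₀.im := hlam₀
  obtain ⟨δ, hδ, hδlam₀⟩ : ∃ δ, 0 < δ ∧ δ < lam₀.im := ⟨lam₀.im / 2, half_pos him, half_lt_self him⟩
  have hsol : ∀ lam : ℂ, δ < lam.im → IsJostSolution q lam (m lam) := fun lam hlam =>
    have ⟨hmeas, hbdd, heq⟩ := hm lam (hδ.trans hlam)
    ⟨hmeas.aestronglyMeasurable, hbdd, heq⟩
  have hint := (differentiableOn_integral_mul_jostSolution hq hδ hsol).differentiableAt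
    ((isOpen_lt continuous_const Complex.continuous_im).mem_nhds hδlam₀)
  have hne : 2 * Complex.I * lam₀ ≠ 0 :=
    mul_ne_zero (by simp) fun h => by simp [h] at him
  have hinv : DifferentiableAt ℂ (fun lam : ℂ => (2 * Complex.I * lam)⁻¹) lam₀ :=
    (by fun_prop : DifferentiableAt ℂ (fun lam : ℂ => 2 * Complex.I * lam) lam₀).inv hne
  exact ((differentiableAt_const 1).sub (hinv.mul hint)).differentiableWithinAt
end
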